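/- arXiv:2302.06234 — 5 statements merged into one kernel-verified Lean document; each statement's English description precedes it below -/
import Mathlib

section
/- If A_1, …, A_n are positive semidefinite real symmetric n×n matrices, then D_n(A_1,…,A_n) ≥ 0, i.e., the mixed determinant is nonnegative on the positive semidefinite cone. -/
open Matrix BigOperators

noncomputable def sgn (b : Bool) : ℝ := if b then 1 else -1

/-- The mixed determinant: the full symmetric multilinear polarization of the
determinant. -/
noncomputable def mixedDet {ι : Type*} [Fintype ι] [DecidableEq ι]
    (M : ι → Matrix ι ι ℝ) : ℝ :=
  (1 / (2 ^ Fintype.card ι * (Fintype.card ι).factorial)) *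
    ∑ ε : ι → Bool, (∏ i, sgn (ε i)) * (∑ i, sgn (ε i) • M i).det

namespace MixedDetAux

lemma sgn_mul_self (b : Bool) : sgn b * sgn b = 1 := by cases b <;> simp [sgn]

lemma sgn_not (b : Bool) : sgn (!b) = - sgn b := by cases b <;> simp [sgn]

/-- Key sign-sum computation. -/
lemma sum_sgn_eq {n : ℕ} (f : Fin n → Fin n) :
    ∑ ε : Fin n → Bool, (∏ i, sgn (ε i)) * (∏ r, sgn (ε (f r)))
      = if Function.Bijective f then (2 : ℝ) ^ n else 0 := by
  by_cases hf : Function.Bijective f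
  · simp only [hf, if_pos]
    have h1 : ∀ ε : Fin n → Bool,
        (∏ i, sgn (ε i)) * (∏ r, sgn (ε (f r))) = 1 := by
      intro ε
      have : (∏ r, sgn (ε (f r))) = ∏ i, sgn (ε i) :=
        Fintype.prod_bijective f hf _ _ (fun _ => rfl)
      rw [this, ← Finset.prod_mul_distrib]
      simp [sgn_mul_self]
    simp only [h1]
    rw [Finset.sum_const]
    simp [Finset.card_univ]
  · simp only [hf, if_neg, not_false_iff]
    have hsurj : ¬ Function.Surjective f := fun h =>
      hf (Finite.surjective_iff_bijective.mp h)
    rw [Function.Surjective] at hsurj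
    push_neg at hsurj
    obtain ⟨i₀, hi₀⟩ := hsurj
    apply Finset.sum_ninvolution (fun ε => Function.update ε i₀ (!ε i₀))
    · intro ε
      have hp1 : (∏ i, sgn (Function.update ε i₀ (!ε i₀) i))
          = - ∏ i, sgn (ε i) := by
        have : ∀ i, sgn (Function.update ε i₀ (!ε i₀) i)
            = (if i = i₀ then (-1 : ℝ) else 1) * sgn (ε i) := by
          intro i
          by_cases h : i = i₀
          · subst h; simp [Function.update_self, sgn_not]
          · simp [Function.update_of_ne h, h]
        rw [Finset.prod_congr rfl (fun i _ => this i), Finset.prod_mul_distrib]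
        simp
      have hp2 : (∏ r, sgn (Function.update ε i₀ (!ε i₀) (f r)))
          = ∏ r, sgn (ε (f r)) := by
        apply Finset.prod_congr rfl
        intro r _
        rw [Function.update_of_ne (hi₀ r)]
      rw [hp1, hp2]; ring
    · intro ε _
      intro h
      have := congrFun h i₀
      simp [Function.update_self] at this
    · intro ε; exact Finset.mem_univ _
    · intro ε
      funext i
      by_cases h : i = i₀
      · subst h; simp [Function.update_self]
      · simp [Function.update_of_ne h]

/-- Multilinear expansion of the determinant whose rows are given as sums. -/
lemma det_rows_sum {n : ℕ} (c : Fin n → Fin n → ℝ) (v : Fin n → Fin n → (Fin n → ℝ)) :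
    (Matrix.of fun r => ∑ m, c r m • v r m).det
      = ∑ g : Fin n → Fin n, (∏ r, c r (g r)) * (Matrix.of fun r => v r (g r)).det := by
  classical
  have h := (Matrix.detRowAlternating :
      (Fin n → ℝ) [⋀^Fin n]→ₗ[ℝ] ℝ).toMultilinearMap.map_sum
    (fun r m => c r m • v r m)
  have h2 : ∀ g : Fin n → Fin n,
      (Matrix.detRowAlternating : (Fin n → ℝ) [⋀^Fin n]→ₗ[ℝ] ℝ).toMultilinearMap
        (fun r => c r (g r) • v r (g r))
      = (∏ r, c r (g r)) * (Matrix.of fun r => v r (g r)).det := by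
    intro g
    rw [MultilinearMap.map_smul_univ, smul_eq_mul]
    rfl
  calc (Matrix.of fun r => ∑ m, c r m • v r m).det
      = (Matrix.detRowAlternating : (Fin n → ℝ) [⋀^Fin n]→ₗ[ℝ] ℝ).toMultilinearMap
          (fun r => ∑ m, c r m • v r m) := rfl
    _ = ∑ g : Fin n → Fin n,
          (Matrix.detRowAlternating : (Fin n → ℝ) [⋀^Fin n]→ₗ[ℝ] ℝ).toMultilinearMap
            (fun r => c r (g r) • v r (g r)) := h
    _ = ∑ g : Fin n → Fin n, (∏ r, c r (g r)) * (Matrix.of fun r => v r (g r)).det :=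
        Finset.sum_congr rfl (fun g _ => h2 g)

lemma det_sum_smul {n : ℕ} (c : Fin n → ℝ) (A : Fin n → Matrix (Fin n) (Fin n) ℝ) :
    (∑ i, c i • A i).det
      = ∑ f : Fin n → Fin n, (∏ r, c (f r)) * (Matrix.of fun r => A (f r) r).det := by
  have h0 : (∑ i, c i • A i) = Matrix.of fun r => ∑ m, c m • A m r := by
    ext r j
    simp [Matrix.sum_apply]
  rw [h0, det_rows_sum (fun _ m => c m) (fun r m => A m r)]

/-- The polarization sum equals `2 ^ n` times the sum over permutations. -/
lemma sum_eps {n : ℕ} (A : Fin n → Matrix (Fin n) (Fin n) ℝ) :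
    ∑ ε : Fin n → Bool, (∏ i, sgn (ε i)) * (∑ i, sgn (ε i) • A i).det
      = (2 : ℝ) ^ n * ∑ σ : Equiv.Perm (Fin n), (Matrix.of fun r => A (σ r) r).det := by
  classical
  have step1 : ∑ ε : Fin n → Bool, (∏ i, sgn (ε i)) * (∑ i, sgn (ε i) • A i).det
      = ∑ f : Fin n → Fin n,
          (if Function.Bijective f then (2 : ℝ) ^ n else 0)
            * (Matrix.of fun r => A (f r) r).det := by
    simp_rw [det_sum_smul, Finset.mul_sum]
    rw [Finset.sum_comm]
    refine Finset.sum_congr rfl (fun f _ => ?_)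
    rw [← sum_sgn_eq f, Finset.sum_mul]
    refine Finset.sum_congr rfl (fun ε _ => ?_)
    ring
  rw [step1, Finset.mul_sum]
  rw [← Finset.sum_filter_of_ne (p := fun f => Function.Bijective f)
      (fun f _ h => by
        by_contra hb
        rw [if_neg hb, zero_mul] at h
        exact h rfl)]
  refine Finset.sum_bij' (fun f hf => Equiv.ofBijective f
      ((Finset.mem_filter.mp hf).2))
    (fun σ _ => ⇑σ) ?_ ?_ ?_ ?_ ?_
  · intro f hf; exact Finset.mem_univ _
  · intro σ _; exact Finset.mem_filter.mpr ⟨Finset.mem_univ _, σ.bijective⟩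
  · intro f hf; rfl
  · intro σ _; exact Equiv.ext fun x => rfl
  · intro f hf
    rw [if_pos ((Finset.mem_filter.mp hf).2)]
    rfl

/-- For `A j = (B j)ᴴ * B j`, the permutation sum is a sum of squares. -/
lemma sum_perm_eq {n : ℕ} (B : Fin n → Matrix (Fin n) (Fin n) ℝ) :
    ∑ σ : Equiv.Perm (Fin n), (Matrix.of fun r => ((B (σ r))ᴴ * B (σ r)) r).det
      = ∑ k : Fin n → Fin n, ((Matrix.of fun j => B j (k j)).det) ^ 2 := by
  classical
  have hrow : ∀ (j : Fin n) (r : Fin n),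
      ((B j)ᴴ * B j) r = ∑ m, B j m r • B j m := by
    intro j r
    funext cc
    simp [Matrix.mul_apply, Matrix.conjTranspose_apply, Finset.sum_apply]
  have step1 : ∀ σ : Equiv.Perm (Fin n),
      (Matrix.of fun r => ((B (σ r))ᴴ * B (σ r)) r).det
        = ∑ k : Fin n → Fin n,
            (∏ r, B (σ r) (k (σ r)) r)
              * (((Equiv.Perm.sign σ : ℤ) : ℝ)
                  * (Matrix.of fun j => B j (k j)).det) := by
    intro σ
    have h1 : (Matrix.of fun r => ((B (σ r))ᴴ * B (σ r)) r)
        = Matrix.of fun r => ∑ m, B (σ r) m r • B (σ r) m := by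
      ext r j
      simp only [Matrix.of_apply]
      exact congrFun (hrow (σ r) r) j
    rw [h1, det_rows_sum (fun r m => B (σ r) m r) (fun r m => B (σ r) m)]
    refine (Fintype.sum_equiv (Equiv.arrowCongr σ.symm (Equiv.refl (Fin n))) _ _ ?_).symm
    intro k
    show (∏ r, B (σ r) (k (σ r)) r) * (((Equiv.Perm.sign σ : ℤ) : ℝ)
          * (Matrix.of fun j => B j (k j)).det)
        = (∏ r, B (σ r) (k (σ r)) r) * (Matrix.of fun r => B (σ r) (k (σ r))).det
    congr 1
    have h2 : (Matrix.of fun r => B (σ r) (k (σ r)))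
        = (Matrix.of fun j => B j (k j)).submatrix σ id := by
      ext r j; rfl
    rw [h2, Matrix.det_permute]
  simp_rw [step1]
  rw [Finset.sum_comm]
  refine Finset.sum_congr rfl (fun k _ => ?_)
  have : ∀ σ : Equiv.Perm (Fin n),
      (∏ r, B (σ r) (k (σ r)) r)
        * (((Equiv.Perm.sign σ : ℤ) : ℝ) * (Matrix.of fun j => B j (k j)).det)
      = (((Equiv.Perm.sign σ : ℤ) : ℝ) * ∏ r, (Matrix.of fun j => B j (k j)) (σ r) r)
          * (Matrix.of fun j => B j (k j)).det := by
    intro σ; simp only [Matrix.of_apply]; ring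
  simp_rw [this, ← Finset.sum_mul]
  rw [← Matrix.det_apply']
  ring

end MixedDetAux

/-- The mixed determinant is nonnegative on the positive semidefinite cone. -/
theorem mixedDet_nonneg (n : ℕ) (A : Fin n → Matrix (Fin n) (Fin n) ℝ)
    (hA : ∀ j, (A j).PosSemidef) :
    0 ≤ mixedDet A := by
  classical
  choose B hB using fun j => (by
    open scoped MatrixOrder in
    obtain ⟨B, hB⟩ := CStarAlgebra.nonneg_iff_eq_star_mul_self.mp (hA j).nonneg
    exact ⟨B, hB⟩ : ∃ B : Matrix (Fin n) (Fin n) ℝ, A j = Bᴴ * B)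
  unfold mixedDet
  rw [MixedDetAux.sum_eps]
  have h1 : ∑ σ : Equiv.Perm (Fin n), (Matrix.of fun r => A (σ r) r).det
      = ∑ σ : Equiv.Perm (Fin n),
          (Matrix.of fun r => ((B (σ r))ᴴ * B (σ r)) r).det := by
    refine Finset.sum_congr rfl (fun σ _ => ?_)
    congr 1
    ext r j
    simp only [Matrix.of_apply, hB]
  rw [h1, MixedDetAux.sum_perm_eq]
  have hpos : (0 : ℝ) < 1 / (2 ^ Fintype.card (Fin n) * (Fintype.card (Fin n)).factorial) := by
    positivity
  have hsq : (0 : ℝ) ≤ ∑ k : Fin n → Fin n, ((Matrix.of fun j => B j (k j)).det) ^ 2 :=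
    Finset.sum_nonneg fun k _ => sq_nonneg _
  positivity
end

section
/- If A_1, …, A_n are positive semidefinite real symmetric n×n matrices, then D_n(A_1,…,A_n) ≤ (1/n!) det(A_1 + ⋯ + A_n). -/
open Matrix BigOperators

section Aux

variable {n : ℕ}

/-- The elementary term attached to a choice `h` of rank-one factors. -/
noncomputable def Tterm (u : Fin n × Fin n → Fin n → ℝ) (h : Fin n → Fin n × Fin n) : ℝ :=
  (∏ i, u (h i) i) * (Matrix.of fun i j => u (h i) j).det

lemma det_sum_expand (u : Fin n × Fin n → Fin n → ℝ) (c : Fin n → ℝ) :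
    (∑ p : Fin n × Fin n, c p.1 • vecMulVec (u p) (u p)).det
      = ∑ h : Fin n → Fin n × Fin n, (∏ i, c (h i).1) * Tterm u h := by
  classical
  have hrow : (∑ p : Fin n × Fin n, c p.1 • vecMulVec (u p) (u p))
      = Matrix.of (fun i => ∑ p : Fin n × Fin n, (c p.1 * u p i) • u p) := by
    ext i j
    simp [Matrix.sum_apply, vecMulVec_apply, Finset.sum_apply, mul_assoc]
  rw [hrow]
  have hdef : (Matrix.of (fun i => ∑ p : Fin n × Fin n, (c p.1 * u p i) • u p)).det
      = (Matrix.detRowAlternating : (Fin n → ℝ) [⋀^Fin n]→ₗ[ℝ] ℝ).toMultilinearMap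
          (fun i => ∑ p : Fin n × Fin n, (c p.1 * u p i) • u p) := rfl
  rw [hdef, MultilinearMap.map_sum]
  refine Finset.sum_congr rfl fun h _ => ?_
  have hsmul := (Matrix.detRowAlternating :
      (Fin n → ℝ) [⋀^Fin n]→ₗ[ℝ] ℝ).toMultilinearMap.map_smul_univ
      (fun i => c (h i).1 * u (h i) i) (fun i => u (h i))
  rw [hsmul, Finset.prod_mul_distrib]
  have h2 : (Matrix.detRowAlternating : (Fin n → ℝ) [⋀^Fin n]→ₗ[ℝ] ℝ).toMultilinearMap
      (fun i => u (h i)) = (Matrix.of fun i j => u (h i) j).det := rfl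
  rw [h2, smul_eq_mul]
  unfold Tterm
  ring

lemma sum_perm_Tterm (u : Fin n × Fin n → Fin n → ℝ) (h : Fin n → Fin n × Fin n) :
    ∑ σ : Equiv.Perm (Fin n), Tterm u (h ∘ σ)
      = ((Matrix.of fun i j => u (h i) j).det) ^ 2 := by
  classical
  set M : Matrix (Fin n) (Fin n) ℝ := Matrix.of fun i j => u (h i) j with hM
  have h1 : ∀ σ : Equiv.Perm (Fin n),
      Tterm u (h ∘ σ) = Matrix.det M * (Equiv.Perm.sign σ * ∏ i, M (σ i) i) := by
    intro σ
    have h3 : (M.submatrix σ id) = Matrix.of fun i j => u (h (σ i)) j := by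
      ext i j; rfl
    have hdet : (Matrix.of fun i j => u (h (σ i)) j).det
        = (Equiv.Perm.sign σ : ℝ) * M.det := by
      rw [← h3, Matrix.det_permute]
    show (∏ i, u (h (σ i)) i) * (Matrix.of fun i j => u (h (σ i)) j).det = _
    rw [hdet]
    have h4 : (∏ i, u (h (σ i)) i) = ∏ i, M (σ i) i := rfl
    rw [h4]; ring
  rw [Finset.sum_congr rfl fun σ _ => h1 σ, ← Finset.mul_sum]
  rw [← Matrix.det_apply' M]
  ring

lemma sgn_parity_sum (f : Fin n → Fin n) :
    ∑ ε : Fin n → Bool, (∏ i, sgn (ε i)) * ∏ i, sgn (ε (f i))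
      = if Function.Bijective f then (2 : ℝ) ^ n else 0 := by
  classical
  have key : ∀ ε : Fin n → Bool, (∏ i, sgn (ε i)) * ∏ i, sgn (ε (f i))
      = ∏ j, sgn (ε j) ^ ((Finset.univ.filter (fun i => f i = j)).card + 1) := by
    intro ε
    have h2 : ∏ i, sgn (ε (f i))
        = ∏ j, sgn (ε j) ^ (Finset.univ.filter (fun i => f i = j)).card := by
      rw [← Finset.prod_fiberwise Finset.univ f (fun i => sgn (ε (f i)))]
      refine Finset.prod_congr rfl fun j _ => ?_
      rw [Finset.prod_congr rfl (fun i hi => by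
        rw [(Finset.mem_filter.mp hi).2] : ∀ i ∈ Finset.univ.filter (fun i => f i = j), sgn (ε (f i)) = sgn (ε j)),
        Finset.prod_const]
    rw [h2, ← Finset.prod_mul_distrib]
    exact Finset.prod_congr rfl fun j _ => (pow_succ' _ _).symm
  simp_rw [key]
  have hswap : ∑ ε : Fin n → Bool, ∏ j, sgn (ε j) ^ ((Finset.univ.filter (fun i => f i = j)).card + 1)
      = ∏ j, ∑ b : Bool, sgn b ^ ((Finset.univ.filter (fun i => f i = j)).card + 1) :=
    (Fintype.prod_sum fun j b => sgn b ^ ((Finset.univ.filter (fun i => f i = j)).card + 1)).symm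
  rw [hswap]
  have hbool : ∀ m : ℕ, ∑ b : Bool, sgn b ^ (m + 1) = if Odd m then 2 else 0 := by
    intro m
    rw [Fintype.sum_bool, show sgn true = 1 from rfl, show sgn false = -1 from rfl, one_pow]
    rcases Nat.even_or_odd m with he | ho
    · rw [if_neg (by simpa [Nat.not_odd_iff_even] using he), Odd.neg_one_pow (Even.add_one he)]
      ring
    · rw [if_pos ho, Even.neg_one_pow (Odd.add_one ho)]
      ring
  simp_rw [hbool]
  by_cases hf : Function.Bijective f
  · rw [if_pos hf]
    have hm : ∀ j, (Finset.univ.filter (fun i => f i = j)).card = 1 := by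
      intro j
      obtain ⟨i, hi⟩ := hf.surjective j
      rw [Finset.card_eq_one]
      refine ⟨i, ?_⟩
      ext x
      simp only [Finset.mem_filter, Finset.mem_univ, true_and, Finset.mem_singleton]
      exact ⟨fun hx => hf.injective (hx.trans hi.symm), fun hx => hx ▸ hi⟩
    simp only [hm]
    norm_num
  · rw [if_neg hf]
    have hex : ∃ j, ¬ Odd (Finset.univ.filter (fun i => f i = j)).card := by
      by_contra hall
      push_neg at hall
      apply hf
      apply Finite.surjective_iff_bijective.mp
      intro j
      obtain ⟨k, hk⟩ := hall j
      have hpos : 0 < (Finset.univ.filter (fun i => f i = j)).card := by omega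
      obtain ⟨i, hi⟩ := Finset.card_pos.mp hpos
      exact ⟨i, (Finset.mem_filter.mp hi).2⟩
    obtain ⟨j, hj⟩ := hex
    exact Finset.prod_eq_zero (Finset.mem_univ j) (if_neg hj)

lemma sum_Tterm_nonneg (u : Fin n × Fin n → Fin n → ℝ)
    (S : Finset (Fin n → Fin n × Fin n))
    (hS : ∀ (σ : Equiv.Perm (Fin n)) (h : Fin n → Fin n × Fin n), h ∈ S → h ∘ σ ∈ S) :
    0 ≤ ∑ h ∈ S, Tterm u h := by
  classical
  have h1 : ∀ σ : Equiv.Perm (Fin n), ∑ h ∈ S, Tterm u (h ∘ σ) = ∑ h ∈ S, Tterm u h := by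
    intro σ
    refine Finset.sum_nbij' (fun h => h ∘ σ) (fun h => h ∘ σ.symm) ?_ ?_ ?_ ?_ ?_
    · intro h hh; exact hS σ h hh
    · intro h hh; exact hS σ.symm h hh
    · intro h _; funext i; simp
    · intro h _; funext i; simp
    · intro h _; rfl
  have key : (n.factorial : ℝ) * ∑ h ∈ S, Tterm u h
      = ∑ h ∈ S, ((Matrix.of fun i j => u (h i) j).det) ^ 2 := by
    calc (n.factorial : ℝ) * ∑ h ∈ S, Tterm u h
        = ∑ _σ : Equiv.Perm (Fin n), ∑ h ∈ S, Tterm u h := by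
          rw [Finset.sum_const, Finset.card_univ, Fintype.card_perm, Fintype.card_fin,
            nsmul_eq_mul]
      _ = ∑ σ : Equiv.Perm (Fin n), ∑ h ∈ S, Tterm u (h ∘ σ) := by
          exact Finset.sum_congr rfl fun σ _ => (h1 σ).symm
      _ = ∑ h ∈ S, ∑ σ : Equiv.Perm (Fin n), Tterm u (h ∘ σ) := Finset.sum_comm
      _ = ∑ h ∈ S, ((Matrix.of fun i j => u (h i) j).det) ^ 2 :=
          Finset.sum_congr rfl fun h _ => sum_perm_Tterm u h
  have h2 : (0:ℝ) ≤ ∑ h ∈ S, ((Matrix.of fun i j => u (h i) j).det) ^ 2 :=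
    Finset.sum_nonneg fun h _ => sq_nonneg _
  have hpos : (0:ℝ) < (n.factorial : ℝ) := by exact_mod_cast Nat.factorial_pos n
  nlinarith [key, h2]

open scoped MatrixOrder in
noncomputable def Matrix.PosSemidef.sqrt {A : Matrix (Fin n) (Fin n) ℝ} (_hA : A.PosSemidef) :
    Matrix (Fin n) (Fin n) ℝ := CFC.sqrt A

open scoped MatrixOrder in
lemma Matrix.PosSemidef.sqrt_mul_self {A : Matrix (Fin n) (Fin n) ℝ} (hA : A.PosSemidef) :
    hA.sqrt * hA.sqrt = A := CFC.sqrt_mul_sqrt_self A hA.nonneg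

open scoped MatrixOrder in
lemma Matrix.PosSemidef.posSemidef_sqrt {A : Matrix (Fin n) (Fin n) ℝ} (hA : A.PosSemidef) :
    hA.sqrt.PosSemidef := (CFC.sqrt_nonneg A).posSemidef

lemma psd_decomp {A : Matrix (Fin n) (Fin n) ℝ} (hA : A.PosSemidef) :
    A = ∑ k : Fin n, vecMulVec (hA.sqrt k) (hA.sqrt k) := by
  ext i j
  have h1 : (hA.sqrt * hA.sqrt) i j = A i j := by rw [hA.sqrt_mul_self]
  have hsym : ∀ a b, hA.sqrt a b = hA.sqrt b a := fun a b => by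
    simpa using (hA.posSemidef_sqrt.1.apply b a)
  rw [Matrix.sum_apply]
  simp only [vecMulVec_apply]
  rw [← h1, Matrix.mul_apply]
  exact Finset.sum_congr rfl fun k _ => by rw [hsym i k]

end Aux

/-- On the positive semidefinite cone, `D_n(A_1,…,A_n) ≤ (1/n!) det(A_1+⋯+A_n)`. -/
theorem mixedDet_le_det_sum (n : ℕ) (A : Fin n → Matrix (Fin n) (Fin n) ℝ)
    (hA : ∀ j, (A j).PosSemidef) :
    mixedDet A ≤ (1 / (n.factorial : ℝ)) * (∑ j, A j).det := by
  classical
  set u : Fin n × Fin n → Fin n → ℝ := fun p => (hA p.1).sqrt p.2 with hu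
  have hsum : ∀ c : Fin n → ℝ,
      (∑ j, c j • A j) = ∑ p : Fin n × Fin n, c p.1 • vecMulVec (u p) (u p) := by
    intro c
    rw [Fintype.sum_prod_type]
    refine Finset.sum_congr rfl fun j _ => ?_
    conv_lhs => rw [psd_decomp (hA j)]
    rw [Finset.smul_sum]
  have hdetc : ∀ c : Fin n → ℝ, (∑ j, c j • A j).det
      = ∑ h : Fin n → Fin n × Fin n, (∏ i, c (h i).1) * Tterm u h := fun c => by
    rw [hsum c, det_sum_expand]
  set P : (Fin n → Fin n × Fin n) → Prop := fun h => Function.Bijective (fun i => (h i).1)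
    with hP
  set Sbij : Finset (Fin n → Fin n × Fin n) := Finset.univ.filter P with hSbij
  have hmix : mixedDet A = (1 / (n.factorial : ℝ)) * ∑ h ∈ Sbij, Tterm u h := by
    unfold mixedDet
    rw [Fintype.card_fin]
    have e1 : ∀ ε : Fin n → Bool, (∏ i, sgn (ε i)) * (∑ i, sgn (ε i) • A i).det
        = ∑ h : Fin n → Fin n × Fin n,
            ((∏ i, sgn (ε i)) * ∏ i, sgn (ε ((h i).1))) * Tterm u h := by
      intro ε
      rw [hdetc (fun j => sgn (ε j)), Finset.mul_sum]
      exact Finset.sum_congr rfl fun h _ => by ring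
    rw [Finset.sum_congr rfl fun ε _ => e1 ε, Finset.sum_comm]
    have e2 : ∀ h : Fin n → Fin n × Fin n,
        ∑ ε : Fin n → Bool, ((∏ i, sgn (ε i)) * ∏ i, sgn (ε ((h i).1))) * Tterm u h
        = (if P h then (2:ℝ) ^ n else 0) * Tterm u h := by
      intro h
      rw [← Finset.sum_mul, sgn_parity_sum (fun i => (h i).1)]
    rw [Finset.sum_congr rfl fun h _ => e2 h]
    have e3 : ∑ h : Fin n → Fin n × Fin n, (if P h then (2:ℝ) ^ n else 0) * Tterm u h
        = (2:ℝ) ^ n * ∑ h ∈ Sbij, Tterm u h := by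
      rw [Finset.mul_sum, hSbij, Finset.sum_filter]
      refine Finset.sum_congr rfl fun h _ => ?_
      by_cases hbij : P h
      · rw [if_pos hbij, if_pos hbij]
      · rw [if_neg hbij, if_neg hbij, zero_mul]
    rw [e3]
    have h2n : (2:ℝ) ^ n ≠ 0 := by positivity
    have hfn : ((n.factorial : ℝ)) ≠ 0 := by
      exact_mod_cast (Nat.factorial_pos n).ne'
    field_simp
  have hdet1 : (∑ j, A j).det = (∑ h ∈ Sbij, Tterm u h)
      + ∑ h ∈ Finset.univ.filter (fun h => ¬ P h), Tterm u h := by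
    have := hdetc (fun _ => 1)
    simp only [one_smul, Finset.prod_const_one, one_mul] at this
    rw [this, hSbij]
    exact (Finset.sum_filter_add_sum_filter_not Finset.univ P _).symm
  have hnn : 0 ≤ ∑ h ∈ Finset.univ.filter (fun h => ¬ P h), Tterm u h := by
    refine sum_Tterm_nonneg u _ ?_
    intro σ h hh
    rw [Finset.mem_filter] at hh ⊢
    refine ⟨Finset.mem_univ _, fun hb => hh.2 ?_⟩
    have : Function.Bijective ((fun i => (h i).1) ∘ σ) := hb
    exact (Function.Bijective.of_comp_iff _ σ.bijective).mp this
  rw [hmix, hdet1]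
  have hc : (0:ℝ) ≤ 1 / (n.factorial : ℝ) := by positivity
  exact mul_le_mul_of_nonneg_left (le_add_of_nonneg_right hnn) hc
end

section
/- Let A be a real symmetric positive semidefinite n×n matrix and suppose A = K + A' where K is positive semidefinite and A' = [[0,0],[0,Σ]] with Σ a positive semidefinite (n−1)×(n−1) symmetric matrix. Then for every positive semidefinite symmetric n×n matrix F, one has D_n(F, A, …, A) ≥ (1/n) f_{11} det Σ, where f_{11} is the (1,1) entry of F. -/
open Matrix BigOperators

namespace MixedDetAux

open Equiv Finset Function

variable {ι : Type*} [Fintype ι] [DecidableEq ι]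

lemma sum_sgn_pow (m : ℕ) : (∑ b : Bool, sgn b ^ (m + 1)) = if Even m then 0 else 2 := by
  rcases Nat.even_or_odd m with h | h
  · simp [Fintype.sum_bool, sgn, h, (h.add_one).neg_one_pow]
  · simp [Fintype.sum_bool, sgn, Nat.not_even_iff_odd.mpr h, (h.add_one).neg_one_pow]

lemma char_sum (g : ι → ι) :
    (∑ ε : ι → Bool, (∏ i, sgn (ε i)) * ∏ r, sgn (ε (g r)))
      = if Function.Bijective g then (2:ℝ) ^ Fintype.card ι else 0 := by
  classical
  set m : ι → ℕ := fun i => #{r ∈ univ | g r = i} with hm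
  have hfib : ∀ ε : ι → Bool,
      (∏ i, sgn (ε i)) * ∏ r, sgn (ε (g r)) = ∏ i, sgn (ε i) ^ (m i + 1) := by
    intro ε
    have h2 : ∏ r, sgn (ε (g r)) = ∏ i : ι, ∏ r ∈ univ with g r = i, sgn (ε (g r)) :=
      (Finset.prod_fiberwise_of_maps_to (fun r _ => Finset.mem_univ (g r)) _).symm
    have h3 : ∀ i : ι, (∏ r ∈ univ with g r = i, sgn (ε (g r))) = sgn (ε i) ^ (m i) := by
      intro i
      rw [Finset.prod_congr rfl (fun r hr => by rw [(Finset.mem_filter.mp hr).2]),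
        Finset.prod_const]
    rw [h2, Finset.prod_congr rfl (fun i _ => h3 i), ← Finset.prod_mul_distrib]
    exact Finset.prod_congr rfl fun i _ => (pow_succ' _ _).symm
  simp only [hfib]
  have hswap : (∑ ε : ι → Bool, ∏ i, sgn (ε i) ^ (m i + 1))
      = ∏ i, ∑ b : Bool, sgn b ^ (m i + 1) := by
    have := (MultilinearMap.mkPiAlgebra ℝ ι ℝ).map_sum (fun i (b : Bool) => sgn b ^ (m i + 1))
    simpa only [MultilinearMap.mkPiAlgebra_apply] using this.symm
  rw [hswap]
  have hsum : ∑ i, m i = Fintype.card ι := by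
    have := Finset.card_eq_sum_card_fiberwise (fun r (_ : r ∈ univ) => Finset.mem_univ (g r))
    simpa [Finset.card_univ] using this.symm
  by_cases hbij : Function.Bijective g
  · have hm1 : ∀ i, m i = 1 := by
      intro i
      have : ({r ∈ univ | g r = i} : Finset ι) = {(Equiv.ofBijective g hbij).symm i} := by
        ext r
        simp only [Finset.mem_filter, Finset.mem_univ, true_and, Finset.mem_singleton]
        rw [Equiv.eq_symm_apply, Equiv.ofBijective_apply]
      simp [hm, this]
    simp only [hbij, if_true]
    have h2 : ∀ i ∈ (univ : Finset ι), (∑ b : Bool, sgn b ^ (m i + 1)) = (2:ℝ) := by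
      intro i _
      rw [sum_sgn_pow, hm1 i]
      norm_num
    rw [Finset.prod_congr rfl h2, Finset.prod_const, Finset.card_univ]
  · have hexist : ∃ i, Even (m i) := by
      by_contra hc
      push_neg at hc
      have hodd : ∀ i, 1 ≤ m i := by
        intro i
        have := hc i
        rcases Nat.eq_zero_or_pos (m i) with h0 | h1
        · exact absurd (h0 ▸ Even.zero) this
        · exact h1
      have hall : ∀ i ∈ (univ : Finset ι), m i = 1 := by
        have h1 : (∑ _i : ι, (1:ℕ)) = ∑ i, m i := by
          simp [hsum, Finset.card_univ]
        have := (Finset.sum_eq_sum_iff_of_le (fun i _ => hodd i)).mp h1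
        intro i hi; exact (this i hi).symm
      have hinj : Function.Injective g := by
        intro a b hab
        have ha : a ∈ ({r ∈ univ | g r = g b} : Finset ι) := by simp [hab]
        have hb : b ∈ ({r ∈ univ | g r = g b} : Finset ι) := by simp
        have hcard : #{r ∈ univ | g r = g b} ≤ 1 := le_of_eq (hall (g b) (mem_univ _))
        exact Finset.card_le_one.mp hcard a ha b hb
      exact hbij (Finite.injective_iff_bijective.mp hinj)
    rcases hexist with ⟨i, hi⟩
    simp only [hbij, if_false]
    refine Finset.prod_eq_zero (Finset.mem_univ i) ?_
    rw [sum_sgn_pow, if_pos hi]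

/-- Extraction of the `i`-th row, as a linear map. -/
def rowLM (i : ι) : Matrix ι ι ℝ →ₗ[ℝ] (ι → ℝ) where
  toFun X := X i
  map_add' := fun _ _ => rfl
  map_smul' := fun _ _ => rfl

/-- The multilinear map `M ↦ ∑_σ det (matrix whose row `i` is row `i` of `M (σ i)`)`. -/
noncomputable def Dmap (ι : Type*) [Fintype ι] [DecidableEq ι] :
    MultilinearMap ℝ (fun _ : ι => Matrix ι ι ℝ) ℝ :=
  ∑ σ : Equiv.Perm ι,
    ((Matrix.detRowAlternating :
        (ι → ℝ) [⋀^ι]→ₗ[ℝ] ℝ).toMultilinearMap.compLinearMap (fun i => rowLM i)).domDomCongr σ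

lemma Dmap_apply (M : ι → Matrix ι ι ℝ) :
    Dmap ι M = ∑ σ : Equiv.Perm ι, (Matrix.of fun i j => M (σ i) i j).det := by
  simp only [Dmap, MultilinearMap.sum_apply, MultilinearMap.domDomCongr_apply,
    MultilinearMap.compLinearMap_apply]
  rfl

lemma polarization (M : ι → Matrix ι ι ℝ) :
    mixedDet M = (1 / (Fintype.card ι).factorial : ℝ) * Dmap ι M := by
  classical
  have expand : ∀ ε : ι → Bool, (∑ i, sgn (ε i) • M i).det
      = ∑ g : ι → ι, (∏ r, sgn (ε (g r))) * (Matrix.of fun r s => M (g r) r s).det := by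
    intro ε
    have h0 : (∑ i, sgn (ε i) • M i).det
        = Matrix.detRowAlternating (fun r => ∑ i : ι, (fun i => sgn (ε i) • M i r) i) := by
      have h1 : ((∑ i, sgn (ε i) • M i) : Matrix ι ι ℝ)
          = Matrix.of (fun r => ∑ i : ι, (fun i => sgn (ε i) • M i r) i) := by
        ext r s
        simp [Matrix.sum_apply, Finset.sum_apply]
      rw [h1]
      rfl
    have h0' : (detRowAlternating fun r => ∑ i : ι, (fun i => sgn (ε i) • M i r) i)
        = (Matrix.detRowAlternating :
          (ι → ℝ) [⋀^ι]→ₗ[ℝ] ℝ).toMultilinearMap (fun r => ∑ i : ι, (fun i => sgn (ε i) • M i r) i) := rfl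
    rw [h0, h0', (Matrix.detRowAlternating :
        (ι → ℝ) [⋀^ι]→ₗ[ℝ] ℝ).toMultilinearMap.map_sum]
    refine Finset.sum_congr rfl fun g _ => ?_
    have h2 := (Matrix.detRowAlternating :
        (ι → ℝ) [⋀^ι]→ₗ[ℝ] ℝ).toMultilinearMap.map_smul_univ
      (fun r => sgn (ε (g r))) (fun r => M (g r) r)
    rw [h2, smul_eq_mul]
    rfl
  have key : (∑ ε : ι → Bool, (∏ i, sgn (ε i)) * (∑ i, sgn (ε i) • M i).det)
      = (2:ℝ) ^ Fintype.card ι * ∑ σ : Equiv.Perm ι, (Matrix.of fun i j => M (σ i) i j).det := by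
    simp only [expand, Finset.mul_sum]
    rw [Finset.sum_comm]
    have hg : ∀ g : ι → ι,
        (∑ ε : ι → Bool, (∏ i, sgn (ε i)) *
          ((∏ r, sgn (ε (g r))) * (Matrix.of fun r s => M (g r) r s).det))
        = (if Function.Bijective g then (2:ℝ) ^ Fintype.card ι else 0) *
            (Matrix.of fun r s => M (g r) r s).det := by
      intro g
      rw [← char_sum g, Finset.sum_mul]
      exact Finset.sum_congr rfl fun ε _ => by ring
    rw [Finset.sum_congr rfl fun g _ => hg g]
    have hsplit : (∑ g : ι → ι, (if Function.Bijective g then (2:ℝ) ^ Fintype.card ι else 0) *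
        (Matrix.of fun r s => M (g r) r s).det)
        = (2:ℝ) ^ Fintype.card ι *
          ∑ g ∈ univ.filter (fun g : ι → ι => Function.Bijective g),
            (Matrix.of fun r s => M (g r) r s).det := by
      rw [Finset.mul_sum, Finset.sum_filter]
      exact Finset.sum_congr rfl fun g _ => by split <;> simp
    rw [hsplit]
    have hperm : (∑ g ∈ univ.filter (fun g : ι → ι => Function.Bijective g),
          (Matrix.of fun r s => M (g r) r s).det)
        = ∑ σ : Equiv.Perm ι, (Matrix.of fun i j => M (σ i) i j).det := by
      refine (Finset.sum_bij (fun (σ : Equiv.Perm ι) _ => (σ : ι → ι)) ?_ ?_ ?_ ?_).symm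
      · intro σ _
        simp only [Finset.mem_filter, Finset.mem_univ, true_and]
        exact σ.bijective
      · intro a _ b _ h
        exact Equiv.coe_fn_injective h
      · intro g hg
        exact ⟨Equiv.ofBijective g (Finset.mem_filter.mp hg).2, Finset.mem_univ _, rfl⟩
      · intro σ _
        rfl
    rw [hperm, Finset.mul_sum]
  rw [mixedDet, key, Dmap_apply]
  have h2n : ((2:ℝ) ^ Fintype.card ι) ≠ 0 := by positivity
  have hfac : ((Fintype.card ι).factorial : ℝ) ≠ 0 := by
    exact_mod_cast (Fintype.card ι).factorial_ne_zero
  field_simp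

lemma Dmap_rankOne (u : ι → (ι → ℝ)) :
    Dmap ι (fun i => Matrix.vecMulVec (u i) (u i)) = (Matrix.of fun r s => u r s).det ^ 2 := by
  rw [Dmap_apply]
  have key : ∀ σ : Equiv.Perm ι,
      (Matrix.of fun r s => Matrix.vecMulVec (u (σ r)) (u (σ r)) r s).det
        = (((Equiv.Perm.sign σ : ℤ) : ℝ) * ∏ r, u (σ r) r) * (Matrix.of fun r s => u r s).det := by
    intro σ
    have h1 : (Matrix.of fun r s => Matrix.vecMulVec (u (σ r)) (u (σ r)) r s)
        = Matrix.of fun r s => (fun i => u (σ i) i) r *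
            ((Matrix.of fun r s => u r s).submatrix σ id) r s := by
      ext r s; simp [Matrix.vecMulVec_apply]
    rw [h1, Matrix.det_mul_column, Matrix.det_permute]; ring
  simp only [key, ← Finset.sum_mul]
  rw [show ∑ σ : Equiv.Perm ι, (((Equiv.Perm.sign σ : ℤ) : ℝ) * ∏ r, u (σ r) r)
      = (Matrix.of fun r s => u r s).det from (Matrix.det_apply' _).symm]
  ring

lemma Dmap_nonneg {M : ι → Matrix ι ι ℝ} (h : ∀ i, (M i).PosSemidef) :
    0 ≤ Dmap ι M := by
  have hB : ∀ i, ∃ B : Matrix ι ι ℝ, M i = Bᴴ * B := fun i =>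
    by open scoped MatrixOrder in exact CStarAlgebra.nonneg_iff_eq_star_mul_self.mp (h i).nonneg
  choose B hBdef using hB
  have hM : ∀ i, M i = ∑ c : ι, Matrix.vecMulVec (B i c) (B i c) := by
    intro i
    ext r s
    rw [hBdef i]
    simp [Matrix.mul_apply, Matrix.vecMulVec_apply, Matrix.conjTranspose_apply,
      Finset.sum_apply, Matrix.sum_apply]
  have hsum : Dmap ι M
      = ∑ g : ι → ι, Dmap ι (fun i => Matrix.vecMulVec (B i (g i)) (B i (g i))) := by
    rw [show M = fun i => ∑ c : ι, Matrix.vecMulVec (B i c) (B i c) from funext hM]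
    exact (Dmap ι).map_sum (fun i c => Matrix.vecMulVec (B i c) (B i c))
  rw [hsum]
  refine Finset.sum_nonneg fun g _ => ?_
  rw [Dmap_rankOne]
  positivity

lemma perm_fix_sum (k : ℕ) (d : ℝ) :
    (∑ σ : Equiv.Perm (Fin 1 ⊕ Fin k), if σ (Sum.inl 0) = Sum.inl 0 then d else 0)
      = (k.factorial : ℝ) * d := by
  classical
  set e : (Fin 1 ⊕ Fin k) ≃ Option (Fin k) :=
    (Equiv.sumComm (Fin 1) (Fin k)).trans
      (((Equiv.refl (Fin k)).sumCongr (Equiv.equivPUnit.{1,1} (Fin 1))).trans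
        (Equiv.optionEquivSumPUnit.{0,0} (Fin k)).symm) with he
  have he0 : e (Sum.inl 0) = none := rfl
  have step1 : (∑ σ : Equiv.Perm (Fin 1 ⊕ Fin k), if σ (Sum.inl 0) = Sum.inl 0 then d else 0)
      = ∑ τ : Equiv.Perm (Option (Fin k)), if τ none = none then d else 0 := by
    refine Fintype.sum_equiv e.permCongr _ _ fun σ => ?_
    have hcond : e (σ (e.symm none)) = none ↔ σ (Sum.inl 0) = Sum.inl 0 := by
      rw [show e.symm none = Sum.inl 0 from by rw [← he0, Equiv.symm_apply_apply]]
      rw [← he0, Equiv.apply_eq_iff_eq]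
    simp [Equiv.permCongr_apply, hcond]
  rw [step1]
  have step2 : (∑ τ : Equiv.Perm (Option (Fin k)), if τ none = none then d else 0)
      = ∑ p : Option (Fin k) × Equiv.Perm (Fin k), if p.1 = none then d else 0 := by
    refine Fintype.sum_equiv Equiv.Perm.decomposeOption _ _ fun τ => ?_
    simp [Equiv.Perm.decomposeOption_apply]
  rw [step2, Fintype.sum_prod_type]
  have hinner : ∀ x : Option (Fin k),
      (∑ _π : Equiv.Perm (Fin k), if x = none then d else 0)
        = if x = none then (k.factorial : ℝ) * d else 0 := by
    intro x
    split
    · rw [Finset.sum_const, Finset.card_univ, nsmul_eq_mul, Fintype.card_perm, Fintype.card_fin]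
    · simp
  simp only [hinner]
  simp

lemma blocks_posSemidef {k : ℕ} {Sig : Matrix (Fin k) (Fin k) ℝ} (hSig : Sig.PosSemidef) :
    (Matrix.fromBlocks (0 : Matrix (Fin 1) (Fin 1) ℝ) 0 0 Sig).PosSemidef := by
  rw [Matrix.posSemidef_iff_dotProduct_mulVec]
  constructor
  · show _ᴴ = _
    have hst : Sigᵀ = Sig := by simpa using hSig.1.eq
    rw [Matrix.fromBlocks_conjTranspose]
    simp [hst]
  · intro x
    have hx : x = Sum.elim (x ∘ Sum.inl) (x ∘ Sum.inr) := (Sum.elim_comp_inl_inr x).symm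
    rw [hx, Matrix.fromBlocks_mulVec]
    simp only [Matrix.zero_mulVec, add_zero, zero_add, star_trivial]
    rw [sumElim_dotProduct_sumElim]
    have h1 := hSig.dotProduct_mulVec_nonneg (x ∘ Sum.inr)
    simp only [star_trivial] at h1
    simpa using h1

lemma Dmap_update_val (k : ℕ) (Sig : Matrix (Fin k) (Fin k) ℝ)
    (F : Matrix (Fin 1 ⊕ Fin k) (Fin 1 ⊕ Fin k) ℝ) :
    Dmap (Fin 1 ⊕ Fin k)
        (Function.update (fun _ : Fin 1 ⊕ Fin k => Matrix.fromBlocks 0 0 0 Sig) (Sum.inl 0) F)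
      = (k.factorial : ℝ) * (F (Sum.inl 0) (Sum.inl 0) * Sig.det) := by
  classical
  set i₀ : Fin 1 ⊕ Fin k := Sum.inl 0 with hi₀
  set A' : Matrix (Fin 1 ⊕ Fin k) (Fin 1 ⊕ Fin k) ℝ := Matrix.fromBlocks 0 0 0 Sig with hA'
  set m1 := Function.update (fun _ : Fin 1 ⊕ Fin k => A') i₀ F with hm1
  rw [Dmap_apply]
  have hterm : ∀ σ : Equiv.Perm (Fin 1 ⊕ Fin k),
      (Matrix.of fun i j => m1 (σ i) i j).det
        = if σ i₀ = i₀ then F i₀ i₀ * Sig.det else 0 := by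
    intro σ
    split
    case isTrue h =>
      have hmat : (Matrix.of fun i j => m1 (σ i) i j)
          = Matrix.fromBlocks (Matrix.of fun _ _ : Fin 1 => F i₀ i₀)
              (Matrix.of fun _ j => F i₀ (Sum.inr j)) 0 Sig := by
        ext i j
        simp only [Matrix.of_apply]
        rcases i with a | a
        · have ha : (Sum.inl a : Fin 1 ⊕ Fin k) = i₀ := by
            rw [hi₀]
            congr
            exact Subsingleton.elim a 0
          rw [ha]
          have : m1 (σ i₀) = F := by rw [h, hm1, Function.update_self]
          rw [this]
          rcases j with b | b
          · have hb : (Sum.inl b : Fin 1 ⊕ Fin k) = i₀ := by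
              rw [hi₀]; congr; exact Subsingleton.elim b 0
            rw [hb]
            rfl
          · rfl
        · have hne : σ (Sum.inr a) ≠ i₀ := by
            intro hco
            have := σ.injective (hco.trans h.symm)
            simp at this
          have : m1 (σ (Sum.inr a)) = A' := by rw [hm1, Function.update_of_ne hne]
          rw [this]
          rcases j with b | b
          · rfl
          · rfl
      rw [hmat, Matrix.det_fromBlocks_zero₂₁, Matrix.det_fin_one]
      rfl
    case isFalse h =>
      refine Matrix.det_eq_zero_of_row_eq_zero i₀ fun j => ?_
      have : m1 (σ i₀) = A' := by rw [hm1, Function.update_of_ne h]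
      show m1 (σ i₀) i₀ j = 0
      rw [this]
      rcases j with b | b
      · rfl
      · rfl
  rw [Finset.sum_congr rfl fun σ _ => hterm σ]
  exact perm_fix_sum k _

end MixedDetAux

/-- If `A = K + diag(0, Σ)` with `K ≽ 0` and `Σ ≽ 0`, then for every positive
semidefinite `F` one has `D_n(F, A, …, A) ≥ (1/n) f₁₁ det Σ`. -/
theorem mixedDet_ge_schur (k : ℕ) (A K : Matrix (Fin 1 ⊕ Fin k) (Fin 1 ⊕ Fin k) ℝ)
    (Sig : Matrix (Fin k) (Fin k) ℝ)
    (hA : A.PosSemidef) (hK : K.PosSemidef) (hSig : Sig.PosSemidef)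
    (hdec : A = K + Matrix.fromBlocks 0 0 0 Sig)
    (F : Matrix (Fin 1 ⊕ Fin k) (Fin 1 ⊕ Fin k) ℝ) (hF : F.PosSemidef) :
    mixedDet (Function.update (fun _ : Fin 1 ⊕ Fin k => A) (Sum.inl 0) F) ≥
      (1 / ((k : ℝ) + 1)) * F (Sum.inl 0) (Sum.inl 0) * Sig.det := by
  classical
  open MixedDetAux in
  set i₀ : Fin 1 ⊕ Fin k := Sum.inl 0 with hi₀
  set A' : Matrix (Fin 1 ⊕ Fin k) (Fin 1 ⊕ Fin k) ℝ := Matrix.fromBlocks 0 0 0 Sig with hA'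
  have hApsd : A'.PosSemidef := blocks_posSemidef hSig
  set T := Function.update (fun _ : Fin 1 ⊕ Fin k => A) i₀ F with hT
  set m1 := Function.update (fun _ : Fin 1 ⊕ Fin k => A') i₀ F with hm1
  set m2 := Function.update (fun _ : Fin 1 ⊕ Fin k => K) i₀
    (0 : Matrix (Fin 1 ⊕ Fin k) (Fin 1 ⊕ Fin k) ℝ) with hm2
  have hsplit : T = m1 + m2 := by
    funext i
    by_cases hi : i = i₀
    · subst hi
      simp [hT, hm1, hm2, Function.update_self]
    · simp only [hT, hm1, hm2, Pi.add_apply, Function.update_of_ne hi]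
      rw [hdec, add_comm]
  have hge : Dmap (Fin 1 ⊕ Fin k) m1 ≤ Dmap (Fin 1 ⊕ Fin k) T := by
    rw [hsplit, (Dmap (Fin 1 ⊕ Fin k)).map_add_univ]
    have huniv : (Finset.univ : Finset (Fin 1 ⊕ Fin k)).piecewise m1 m2 = m1 :=
      Finset.piecewise_univ m1 m2
    have hterm : ∀ s : Finset (Fin 1 ⊕ Fin k),
        0 ≤ Dmap (Fin 1 ⊕ Fin k) (s.piecewise m1 m2) := by
      intro s
      by_cases hs : i₀ ∈ s
      · apply Dmap_nonneg
        intro i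
        by_cases hi : i ∈ s
        · rw [Finset.piecewise_eq_of_mem _ _ _ hi]
          by_cases hii : i = i₀
          · subst hii
            rw [hm1, Function.update_self]
            exact hF
          · rw [hm1, Function.update_of_ne hii]
            exact hApsd
        · rw [Finset.piecewise_eq_of_notMem _ _ _ hi]
          have hii : i ≠ i₀ := fun hco => hi (hco ▸ hs)
          rw [hm2, Function.update_of_ne hii]
          exact hK
      · have hzero : s.piecewise m1 m2 i₀ = 0 := by
          rw [Finset.piecewise_eq_of_notMem _ _ _ hs, hm2, Function.update_self]
        rw [(Dmap (Fin 1 ⊕ Fin k)).map_coord_zero i₀ hzero]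
    calc Dmap (Fin 1 ⊕ Fin k) m1
        = Dmap (Fin 1 ⊕ Fin k) ((Finset.univ : Finset (Fin 1 ⊕ Fin k)).piecewise m1 m2) := by
          rw [huniv]
      _ ≤ ∑ s : Finset (Fin 1 ⊕ Fin k), Dmap (Fin 1 ⊕ Fin k) (s.piecewise m1 m2) :=
          Finset.single_le_sum (fun s _ => hterm s) (Finset.mem_univ _)
  have hval : Dmap (Fin 1 ⊕ Fin k) m1
      = (k.factorial : ℝ) * (F i₀ i₀ * Sig.det) := Dmap_update_val k Sig F
  have hcard : Fintype.card (Fin 1 ⊕ Fin k) = k + 1 := by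
    simp [Fintype.card_sum, add_comm]
  rw [polarization, hcard]
  have hcoef : (0:ℝ) < 1 / ((k+1).factorial : ℝ) := by
    have : (0:ℝ) < ((k+1).factorial : ℝ) := by
      exact_mod_cast (k+1).factorial_pos
    positivity
  have hmain : (1 / ((k+1).factorial : ℝ)) * ((k.factorial : ℝ) * (F i₀ i₀ * Sig.det))
      ≤ (1 / ((k+1).factorial : ℝ)) * Dmap (Fin 1 ⊕ Fin k) T := by
    apply mul_le_mul_of_nonneg_left _ (le_of_lt hcoef)
    rw [← hval]
    exact hge
  refine le_trans (le_of_eq ?_) hmain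
  rw [Nat.factorial_succ]
  have hk1 : ((k:ℝ) + 1) ≠ 0 := by positivity
  have hkf : ((k.factorial : ℝ)) ≠ 0 := by
    exact_mod_cast k.factorial_ne_zero
  push_cast
  field_simp
end

section
/- Let 𝔸 and B be real symmetric n×n matrices with 𝔸 − B positive semidefinite and B positive semidefinite. Then det 𝔸 ≥ det B. In particular, if 𝔸 = ∑_{j=1}^n A_j where each A_j is positive semidefinite and A_j − ρ_j U_j⊗U_j is positive semidefinite with ρ_j ≥ 0, U_j = (1,u_j) ∈ ℝⁿ, then det 𝔸 ≥ (∏_j ρ_j) · (Cor(u_1,…,u_n))². -/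
open Matrix BigOperators

section Helpers

variable {n : Type*} [Fintype n] [DecidableEq n]

lemma psd_det_nonneg {A : Matrix n n ℝ} (hA : A.PosSemidef) : 0 ≤ A.det := by
  rw [hA.1.det_eq_prod_eigenvalues]
  exact Finset.prod_nonneg fun i _ => hA.eigenvalues_nonneg i

lemma det_one_add_psd {M : Matrix n n ℝ} (hM : M.PosSemidef) : 1 ≤ (1 + M).det := by
  have h1 : (1 + M).PosSemidef := Matrix.PosSemidef.add .one hM
  rw [h1.1.det_eq_prod_eigenvalues]
  have key : ∀ i, 1 ≤ h1.1.eigenvalues i := by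
    intro i
    rw [h1.1.eigenvalues_eq]
    set v := h1.1.eigenvectorBasis i with hv
    have hnorm : ‖v‖ = 1 := h1.1.eigenvectorBasis.orthonormal.1 i
    have hdot : star (⇑v) ⬝ᵥ (⇑v) = (1 : ℝ) := by
      have := EuclideanSpace.inner_eq_star_dotProduct v v
      rw [real_inner_self_eq_norm_sq, hnorm] at this
      simpa using this.symm
    have hMv : 0 ≤ star (⇑v) ⬝ᵥ (M *ᵥ ⇑v) := hM.dotProduct_mulVec_nonneg ⇑v
    rw [add_mulVec, one_mulVec, dotProduct_add, hdot]
    simpa using hMv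
  calc (1:ℝ) = ∏ i : n, 1 := by simp
    _ ≤ ∏ i, h1.1.eigenvalues i :=
        Finset.prod_le_prod (by simp) (fun i _ => key i)

lemma det_mono_psd {A B : Matrix n n ℝ} (hAB : (A - B).PosSemidef) (hB : B.PosSemidef) :
    B.det ≤ A.det := by
  by_cases hd : B.det = 0
  · rw [hd]
    have hA : A.PosSemidef := by simpa using hAB.add hB
    exact psd_det_nonneg hA
  · set S := (open scoped MatrixOrder in CFC.sqrt B) with hSdef
    have hS : S.PosSemidef := by open scoped MatrixOrder in exact (CFC.sqrt_nonneg B).posSemidef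
    have hSS : S * S = B := by open scoped MatrixOrder in exact CFC.sqrt_mul_sqrt_self B hB.nonneg
    have hdetS : S.det * S.det = B.det := by rw [← det_mul, hSS]
    have hSdet : S.det ≠ 0 := fun h => hd (by rw [← hdetS, h, zero_mul])
    have hSunit : IsUnit S.det := isUnit_iff_ne_zero.mpr hSdet
    have hinv : S * S⁻¹ = 1 := mul_nonsing_inv S hSunit
    have hinv' : S⁻¹ * S = 1 := nonsing_inv_mul S hSunit
    set M := S⁻¹ * (A - B) * S⁻¹ with hM
    have hMpsd : M.PosSemidef := by
      have h := hAB.conjTranspose_mul_mul_same S⁻¹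
      have he : (S⁻¹)ᴴ = S⁻¹ := hS.1.inv.eq
      rwa [he] at h
    have hA_eq : A = S * (1 + M) * S := by
      have h1 : S * M * S = A - B := by
        rw [hM]
        calc S * (S⁻¹ * (A - B) * S⁻¹) * S
            = (S * S⁻¹) * (A - B) * (S⁻¹ * S) := by noncomm_ring
          _ = A - B := by rw [hinv, hinv', one_mul, mul_one]
      calc A = B + (A - B) := by noncomm_ring
        _ = S * S + S * M * S := by rw [hSS, h1]
        _ = S * (1 + M) * S := by noncomm_ring
    have hdetA : A.det = (S.det * S.det) * (1 + M).det := by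
      rw [hA_eq, det_mul, det_mul]; ring
    rw [hdetA, ← hdetS]
    have h1 := det_one_add_psd hMpsd
    nlinarith [sq_nonneg S.det, sq_nonneg (S.det * S.det)]

end Helpers

/-- Monotonicity of the determinant on the positive semidefinite cone, and the
resulting lower bound `det(∑ A_j) ≥ (∏ ρ_j) Cor(u_1,…,u_n)²` when each `A_j`
dominates the rank-one matrix `ρ_j U_j ⊗ U_j`, `U_j = (1, u_j)`. -/
theorem det_monotone_and_cor_bound (k : ℕ) :
    (∀ (𝔸 B : Matrix (Fin 1 ⊕ Fin k) (Fin 1 ⊕ Fin k) ℝ),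
      (𝔸 - B).PosSemidef → B.PosSemidef → B.det ≤ 𝔸.det) ∧
    (∀ (A : Fin 1 ⊕ Fin k → Matrix (Fin 1 ⊕ Fin k) (Fin 1 ⊕ Fin k) ℝ)
      (ρ : Fin 1 ⊕ Fin k → ℝ) (u : Fin 1 ⊕ Fin k → (Fin k → ℝ)),
      (∀ j, 0 ≤ ρ j) →
      (∀ j, (A j).PosSemidef) →
      (∀ j, (A j - ρ j • Matrix.vecMulVec (Sum.elim (fun _ => 1) (u j))
          (Sum.elim (fun _ => 1) (u j))).PosSemidef) →
      (∑ j, A j).det ≥ (∏ j, ρ j) *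
        ((Matrix.of fun i j => Sum.elim (fun _ : Fin 1 => (1 : ℝ)) (fun r => u j r) i).det) ^ 2) := by
  refine ⟨fun 𝔸 B h1 h2 => det_mono_psd h1 h2, ?_⟩
  intro A ρ u hρ hA hA2
  set C : Matrix (Fin 1 ⊕ Fin k) (Fin 1 ⊕ Fin k) ℝ :=
    Matrix.of fun i j => Sum.elim (fun _ : Fin 1 => (1 : ℝ)) (fun r => u j r) i with hC
  set V : (Fin 1 ⊕ Fin k) → (Fin 1 ⊕ Fin k) → ℝ :=
    fun j => Sum.elim (fun _ => 1) (u j) with hV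
  set B : Matrix (Fin 1 ⊕ Fin k) (Fin 1 ⊕ Fin k) ℝ := C * diagonal ρ * Cᵀ with hB
  have hCV : ∀ i j, C i j = V j i := fun _ _ => rfl
  have hBeq : B = ∑ j, ρ j • vecMulVec (V j) (V j) := by
    have hmid : diagonal ρ * Cᵀ = Matrix.of (fun j l => ρ j * C l j) := by
      ext j l; simp [Matrix.diagonal_mul]
    ext i l
    rw [hB, Matrix.mul_assoc, hmid]
    simp only [Matrix.mul_apply, Matrix.of_apply, Matrix.sum_apply, Matrix.smul_apply,
      Matrix.vecMulVec_apply, smul_eq_mul]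
    refine Finset.sum_congr rfl fun j _ => ?_
    rw [hCV i j, hCV l j]
    ring
  have hdiff : ((∑ j, A j) - B).PosSemidef := by
    rw [hBeq, ← Finset.sum_sub_distrib]
    exact Finset.sum_induction _ _ (fun a b ha hb => ha.add hb) Matrix.PosSemidef.zero
      (fun j _ => hA2 j)
  have hBpsd : B.PosSemidef := by
    have hd : (diagonal ρ).PosSemidef := Matrix.PosSemidef.diagonal fun j => hρ j
    have h := hd.mul_mul_conjTranspose_same C
    rwa [conjTranspose_eq_transpose_of_trivial] at h
  have hdetB : B.det = (∏ j, ρ j) * C.det ^ 2 := by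
    rw [hB, det_mul, det_mul, det_diagonal, det_transpose]; ring
  calc (∑ j, A j).det ≥ B.det := det_mono_psd hdiff hBpsd
    _ = (∏ j, ρ j) * C.det ^ 2 := hdetB
end

section
/- (Gagliardo's inequality) For nonnegative measurable functions f_1, …, f_d on ℝ^{d−1} with f_j ∈ L^{d−1}(ℝ^{d−1}), the function f(y) = ∏_{j=1}^d f_j(ŷ_j) (where ŷ_j ∈ ℝ^{d−1} omits the j-th coordinate of y ∈ ℝ^d) is integrable on ℝ^d and ∫_{ℝ^d} f(y) dy ≤ ∏_{j=1}^d ‖f_j‖_{L^{d−1}(ℝ^{d−1})}. -/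
/-!
Loomis–Whitney by induction on the dimension, for `G_j = ‖f_j‖^(d-1)`: in dimension `d + 1`,
`∫ ∏_j G_j(ŷ_j)^(1/d) ≤ ∏_j (∫ G_j)^(1/d)`; for `d = 1` this is Fubini. Write `y = (x, t)`.
Only the last factor does not depend on `t`; Hölder in `t` for the other `d` factors, each with
exponent `1/d`, bounds the inner integral by `∏_k H_k(x̂_k)^(1/d)`, where `H_k` integrates `G_k`
along the `t`-lines. Hölder in `x` with weights `1/d` and `(d-1)/d` and the induction hypothesis
for the `H_k` finish the step, since `∫ H_k = ∫ G_k`.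
-/

open MeasureTheory
open scoped ENNReal

theorem Fin.snoc_comp_last_succAbove {β : Type*} {n : ℕ} (x : Fin n → β) (t : β) :
    (Fin.snoc x t : Fin (n + 1) → β) ∘ (Fin.last n).succAbove = x := by
  rw [Fin.succAbove_last, Fin.snoc_comp_castSucc]

theorem Fin.snoc_comp_castSucc_succAbove {β : Type*} {n : ℕ} (x : Fin (n + 1) → β) (t : β)
    (k : Fin (n + 1)) :
    (Fin.snoc x t : Fin (n + 2) → β) ∘ k.castSucc.succAbove = Fin.snoc (x ∘ k.succAbove) t := by
  funext i
  cases i using Fin.lastCases with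
  | last => simp [Fin.succAbove_castSucc_of_le _ _ (Fin.le_last k)]
  | cast i => simp [Fin.castSucc_succAbove_castSucc]

theorem ENNReal.prod_rpow_rpow {ι : Type*} (s : Finset ι) (a : ι → ℝ≥0∞) (p : ℝ) {q : ℝ}
    (hq : 0 ≤ q) : (∏ i ∈ s, a i ^ p) ^ q = ∏ i ∈ s, a i ^ (p * q) := by
  simp_rw [← ENNReal.prod_rpow_of_nonneg hq, ENNReal.rpow_mul]

section

variable {α : Type*} [MeasurableSpace α] (μ : Measure α)

theorem measurable_fin_snoc {n : ℕ} :
    Measurable fun p : (Fin n → α) × α => (Fin.snoc p.1 p.2 : Fin (n + 1) → α) := by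
  refine measurable_pi_lambda _ fun i => ?_
  cases i using Fin.lastCases with
  | last => simpa using measurable_snd
  | cast i => simpa only [Fin.snoc_castSucc] using measurable_fst.eval

theorem Measurable.comp_fin_snoc {β : Type*} [MeasurableSpace β] {n : ℕ}
    {g : (Fin (n + 1) → α) → β} (hg : Measurable g) (x : Fin n → α) :
    Measurable fun t => g (Fin.snoc x t) :=
  hg.comp (measurable_fin_snoc.comp measurable_prodMk_left)

theorem measurable_prod_comp_succAbove {M : Type*} [CommMonoid M] [MeasurableSpace M]
    [MeasurableMul₂ M] {n : ℕ} {G : Fin (n + 1) → (Fin n → α) → M}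
    (hG : ∀ j, Measurable (G j)) :
    Measurable fun y : Fin (n + 1) → α => ∏ j, G j (y ∘ j.succAbove) :=
  Finset.measurable_prod _ fun j _ =>
    (hG j).comp (measurable_pi_lambda _ fun _ => measurable_pi_apply _)

variable [SigmaFinite μ]

theorem lintegral_pi_eq_lintegral_lintegral_snoc {n : ℕ}
    {F : (Fin (n + 1) → α) → ℝ≥0∞} (hF : Measurable F) :
    ∫⁻ y, F y ∂Measure.pi (fun _ => μ) =
      ∫⁻ x, ∫⁻ t, F (Fin.snoc x t) ∂μ ∂Measure.pi (fun _ => μ) := by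
  have e := (measurePreserving_piFinSuccAbove (fun _ : Fin (n + 1) => μ) (Fin.last n)).symm
  rw [← e.lintegral_comp hF]
  refine (lintegral_prod_symm _ (hF.comp e.measurable).aemeasurable).trans ?_
  simp [MeasurableEquiv.piFinSuccAbove, Fin.snocEquiv]

theorem lintegral_prod_comp_succAbove_eq_lintegral_last_mul {n : ℕ}
    {G : Fin (n + 2) → (Fin (n + 1) → α) → ℝ≥0∞} (hG : ∀ j, Measurable (G j)) :
    ∫⁻ y, ∏ j, G j (y ∘ j.succAbove) ∂Measure.pi (fun _ => μ) =
      ∫⁻ x, G (Fin.last _) x *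
        ∫⁻ t, ∏ k : Fin (n + 1), G k.castSucc (Fin.snoc (x ∘ k.succAbove) t) ∂μ
        ∂Measure.pi (fun _ => μ) := by
  rw [lintegral_pi_eq_lintegral_lintegral_snoc μ (measurable_prod_comp_succAbove hG)]
  refine lintegral_congr fun x => ?_
  have h_meas : Measurable fun t =>
      ∏ k : Fin (n + 1), G k.castSucc (Fin.snoc (x ∘ k.succAbove) t) :=
    Finset.measurable_prod _ fun k _ => (hG _).comp_fin_snoc _
  simp_rw [Fin.prod_univ_castSucc (n := n + 1), Fin.snoc_comp_last_succAbove,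
    Fin.snoc_comp_castSucc_succAbove]
  rw [lintegral_mul_const _ h_meas, mul_comm]

theorem lintegral_prod_comp_succAbove_fin_two {G : Fin 2 → (Fin 1 → α) → ℝ≥0∞}
    (hG : ∀ j, Measurable (G j)) :
    ∫⁻ y, ∏ j, G j (y ∘ j.succAbove) ∂Measure.pi (fun _ => μ) =
      ∏ j, ∫⁻ x, G j x ∂Measure.pi (fun _ => μ) := by
  have h_snoc (x : Fin 1 → α) (t : α) :
      ∏ j, G j (Fin.snoc x t ∘ j.succAbove) = G 0 (fun _ => t) * G 1 x := by
    rw [Fin.prod_univ_two]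
    congr 2
    funext i
    rw [Subsingleton.elim i 0]
    rfl
  have h_const : ∫⁻ t, G 0 (fun _ => t) ∂μ = ∫⁻ x, G 0 x ∂Measure.pi (fun _ => μ) :=
    (measurePreserving_funUnique μ (Fin 1)).symm.lintegral_comp (hG 0)
  simp_rw [lintegral_pi_eq_lintegral_lintegral_snoc μ (measurable_prod_comp_succAbove hG), h_snoc]
  rw [Fin.prod_univ_two, ← h_const, ← lintegral_const_mul _ (hG 1)]
  exact lintegral_congr fun x => lintegral_mul_const _ ((hG 0).comp (by fun_prop))

theorem lintegral_prod_comp_succAbove_rpow_le_succ {n : ℕ}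
    (ih : ∀ G : Fin (n + 2) → (Fin (n + 1) → α) → ℝ≥0∞, (∀ j, Measurable (G j)) →
      ∫⁻ y, ∏ j, G j (y ∘ j.succAbove) ^ ((n : ℝ) + 1)⁻¹ ∂Measure.pi (fun _ => μ) ≤
        ∏ j, (∫⁻ x, G j x ∂Measure.pi (fun _ => μ)) ^ ((n : ℝ) + 1)⁻¹)
    {G : Fin (n + 3) → (Fin (n + 2) → α) → ℝ≥0∞} (hG : ∀ j, Measurable (G j)) :
    ∫⁻ y, ∏ j, G j (y ∘ j.succAbove) ^ ((n : ℝ) + 2)⁻¹ ∂Measure.pi (fun _ => μ) ≤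
      ∏ j, (∫⁻ x, G j x ∂Measure.pi (fun _ => μ)) ^ ((n : ℝ) + 2)⁻¹ := by
  set r : ℝ := (n : ℝ) + 2
  set s : ℝ := (n : ℝ) + 1
  have hr : 0 < r := by positivity
  have hs : 0 < s := by positivity
  set H : Fin (n + 2) → (Fin (n + 1) → α) → ℝ≥0∞ :=
    fun k z => ∫⁻ t, G k.castSucc (Fin.snoc z t) ∂μ
  have hH : ∀ k, Measurable (H k) := fun k =>
    ((hG k.castSucc).comp measurable_fin_snoc).lintegral_prod_right'
  have h_inner (x : Fin (n + 2) → α) :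
      ∫⁻ t, ∏ k : Fin (n + 2), G k.castSucc (Fin.snoc (x ∘ k.succAbove) t) ^ r⁻¹ ∂μ ≤
        ∏ k, H k (x ∘ k.succAbove) ^ r⁻¹ := by
    refine ENNReal.lintegral_prod_norm_pow_le (p := fun _ => r⁻¹)
      (f := fun (k : Fin (n + 2)) t => G k.castSucc (Fin.snoc (x ∘ k.succAbove) t)) _
      (fun k _ => ((hG _).comp_fin_snoc _).aemeasurable)
      ?_ fun _ _ => by positivity
    rw [Finset.sum_const, Finset.card_fin, nsmul_eq_mul]
    push_cast
    exact mul_inv_cancel₀ hr.ne'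
  have h_exp : s⁻¹ * (s / r) = r⁻¹ := by field_simp
  calc ∫⁻ y, ∏ j, G j (y ∘ j.succAbove) ^ r⁻¹ ∂Measure.pi (fun _ => μ)
      = ∫⁻ x, G (Fin.last _) x ^ r⁻¹ *
          ∫⁻ t, ∏ k : Fin (n + 2), G k.castSucc (Fin.snoc (x ∘ k.succAbove) t) ^ r⁻¹ ∂μ
          ∂Measure.pi (fun _ => μ) :=
        lintegral_prod_comp_succAbove_eq_lintegral_last_mul μ fun j => (hG j).pow_const _
    _ ≤ ∫⁻ x, G (Fin.last _) x ^ r⁻¹ * (∏ k, H k (x ∘ k.succAbove) ^ s⁻¹) ^ (s / r)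
          ∂Measure.pi (fun _ => μ) := by
        gcongr with x
        rw [ENNReal.prod_rpow_rpow _ _ _ (by positivity), h_exp]
        exact h_inner x
    _ ≤ (∫⁻ x, G (Fin.last _) x ∂Measure.pi (fun _ => μ)) ^ r⁻¹ *
          (∫⁻ x, ∏ k, H k (x ∘ k.succAbove) ^ s⁻¹ ∂Measure.pi (fun _ => μ)) ^ (s / r) :=
        ENNReal.lintegral_mul_norm_pow_le (hG _).aemeasurable
          (measurable_prod_comp_succAbove fun k => (hH k).pow_const _).aemeasurable
          (by positivity) (by positivity) (by field_simp; ring)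
    _ ≤ (∫⁻ x, G (Fin.last _) x ∂Measure.pi (fun _ => μ)) ^ r⁻¹ *
          (∏ k, (∫⁻ z, H k z ∂Measure.pi (fun _ => μ)) ^ s⁻¹) ^ (s / r) := by
        gcongr
        exact ih H hH
    _ = ∏ j, (∫⁻ x, G j x ∂Measure.pi (fun _ => μ)) ^ r⁻¹ := by
        simp_rw [ENNReal.prod_rpow_rpow _ _ _ (by positivity : 0 ≤ s / r), h_exp, H,
          ← lintegral_pi_eq_lintegral_lintegral_snoc μ (hG _), Fin.prod_univ_castSucc (n := n + 2)]
        rw [mul_comm]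

theorem lintegral_prod_comp_succAbove_rpow_le (n : ℕ) {G : Fin (n + 2) → (Fin (n + 1) → α) → ℝ≥0∞}
    (hG : ∀ j, Measurable (G j)) :
    ∫⁻ y, ∏ j, G j (y ∘ j.succAbove) ^ ((n : ℝ) + 1)⁻¹ ∂Measure.pi (fun _ => μ) ≤
      ∏ j, (∫⁻ x, G j x ∂Measure.pi (fun _ => μ)) ^ ((n : ℝ) + 1)⁻¹ := by
  induction n with
  | zero => simpa using (lintegral_prod_comp_succAbove_fin_two μ hG).le
  | succ n ih =>
    have h_exp : ((n + 1 : ℕ) : ℝ) + 1 = n + 2 := by push_cast; ring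
    rw [h_exp]
    exact lintegral_prod_comp_succAbove_rpow_le_succ μ (fun _ hG => ih hG) hG

theorem lintegral_enorm_prod_comp_succAbove_le {R : Type*} [NormedCommRing R] [NormMulClass R]
    [NormOneClass R] [MeasurableSpace R] [OpensMeasurableSpace R] (n : ℕ)
    {f : Fin (n + 2) → (Fin (n + 1) → α) → R} (hf : ∀ j, Measurable (f j)) :
    ∫⁻ y, ‖∏ j, f j (y ∘ j.succAbove)‖ₑ ∂Measure.pi (fun _ => μ) ≤
      ∏ j, eLpNorm (f j) (n + 1) (Measure.pi fun _ => μ) := by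
  have h_exp : ((n : ℝ≥0∞) + 1).toReal = (n : ℝ) + 1 := by
    rw [← Nat.cast_succ, ENNReal.toReal_natCast, Nat.cast_succ]
  have h_lw := lintegral_prod_comp_succAbove_rpow_le μ n
    (G := fun j x => ‖f j x‖ₑ ^ ((n : ℝ) + 1)) fun j => (hf j).enorm.pow_const _
  have h_norm (j : Fin (n + 2)) : eLpNorm (f j) (n + 1) (Measure.pi fun _ => μ) =
      (∫⁻ x, ‖f j x‖ₑ ^ ((n : ℝ) + 1) ∂Measure.pi fun _ => μ) ^ ((n : ℝ) + 1)⁻¹ := by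
    rw [eLpNorm_eq_lintegral_rpow_enorm_toReal (by simp) (by simp), h_exp, one_div]
  simp_rw [h_norm]
  convert h_lw using 3 with y
  simp_rw [← ENNReal.rpow_mul, mul_inv_cancel₀ (by positivity : (n : ℝ) + 1 ≠ 0),
    ENNReal.rpow_one, enorm_eq_nnnorm, nnnorm_prod, ENNReal.ofNNReal_finsetProd]

end

theorem gagliardo_general (e : ℕ) (he : 1 ≤ e) (f : Fin (e + 1) → (Fin e → ℝ) → ℝ)
    (hmeas : ∀ j, Measurable (f j))
    (hLp : ∀ j, MemLp (f j) (e : ℝ≥0∞) volume) :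
    Integrable (fun y : Fin (e + 1) → ℝ =>
      ∏ j, f j (fun i => y (j.succAbove i))) volume ∧
    ∫ y : Fin (e + 1) → ℝ, ∏ j, f j (fun i => y (j.succAbove i)) ≤
      ∏ j, (eLpNorm (f j) (e : ℝ≥0∞) volume).toReal := by
  obtain ⟨n, rfl⟩ : ∃ n, e = n + 1 := ⟨e - 1, by omega⟩
  rw [Nat.cast_succ] at hLp ⊢
  have h_bound : ∫⁻ y : Fin (n + 2) → ℝ, ‖∏ j, f j (fun i => y (j.succAbove i))‖ₑ ≤
      ∏ j, eLpNorm (f j) (n + 1) volume :=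
    lintegral_enorm_prod_comp_succAbove_le volume n hmeas
  have h_fin : ∏ j, eLpNorm (f j) (n + 1) volume < ∞ :=
    ENNReal.prod_lt_top fun j _ => (hLp j).eLpNorm_lt_top
  refine ⟨⟨(measurable_prod_comp_succAbove hmeas).aestronglyMeasurable,
    h_bound.trans_lt h_fin⟩, ?_⟩
  calc ∫ y : Fin (n + 2) → ℝ, ∏ j, f j (fun i => y (j.succAbove i))
      ≤ ‖∫ y : Fin (n + 2) → ℝ, ∏ j, f j (fun i => y (j.succAbove i))‖ := Real.le_norm_self _
    _ ≤ (∏ j, eLpNorm (f j) (n + 1) volume).toReal := by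
        rw [← toReal_enorm]
        exact ENNReal.toReal_mono h_fin.ne ((enorm_integral_le_lintegral_enorm _).trans h_bound)
    _ = ∏ j, (eLpNorm (f j) (n + 1) volume).toReal := ENNReal.toReal_prod _ _

/-- Gagliardo's inequality: if `f_j ∈ L^{d-1}(ℝ^{d-1})` are nonnegative
(`d = e+1 ≥ 2`), then `y ↦ ∏_j f_j(ŷ_j)` is integrable on `ℝ^d` and its integral
is at most `∏_j ‖f_j‖_{L^{d-1}}`. -/
theorem gagliardo (e : ℕ) (he : 1 ≤ e) (f : Fin (e + 1) → (Fin e → ℝ) → ℝ)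
    (hmeas : ∀ j, Measurable (f j)) (hpos : ∀ j x, 0 ≤ f j x)
    (hLp : ∀ j, MemLp (f j) (e : ℝ≥0∞) volume) :
    Integrable (fun y : Fin (e + 1) → ℝ =>
      ∏ j, f j (fun i => y (j.succAbove i))) volume ∧
    ∫ y : Fin (e + 1) → ℝ, ∏ j, f j (fun i => y (j.succAbove i)) ≤
      ∏ j, (eLpNorm (f j) (e : ℝ≥0∞) volume).toReal :=
  gagliardo_general e he f hmeas hLp
end
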